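/- arXiv:2605.00467 — 2 statements merged into one kernel-verified Lean document; each statement's English description precedes it below -/
import Mathlib

section
/- Let n be a positive integer and let x, z be n×n complex matrices such that I − x xᴴ and I − xᴴ x are (Hermitian) positive definite and I + z xᴴ is invertible. Then the matrix I + (I − x xᴴ)^{1/2} z (I − xᴴ x)^{−1/2} xᴴ is invertible and (I + (I − x xᴴ)^{1/2} z (I − xᴴ x)^{−1/2} xᴴ)^{−1} = (I − x xᴴ)^{1/2} (I + z xᴴ)^{−1} (I − x xᴴ)^{−1/2}. -/
/-!
From `xᴴ (1 - x xᴴ) = (1 - xᴴ x) xᴴ`, the matrix `xᴴ` also intertwines the square roots of these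
two Hermitian matrices: on the union of their finite spectra `√·` agrees with a polynomial, and
intertwining passes to polynomials. Hence `(1 - xᴴ x)^{-1/2} xᴴ = xᴴ (1 - x xᴴ)^{-1/2}`, and the
matrix to invert is `1 + z xᴴ` conjugated by `(1 - x xᴴ)^{1/2}`.
-/

open Matrix
open scoped ComplexOrder

/-- The square root of a positive semidefinite matrix, as defined in the older Mathlib
(`Matrix.PosSemidef.sqrt`, since removed). -/
noncomputable def Matrix.PosSemidef.sqrt {n 𝕜 : Type*} [Fintype n] [DecidableEq n] [RCLike 𝕜]
    {A : Matrix n n 𝕜} (hA : A.PosSemidef) : Matrix n n 𝕜 :=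
  hA.1.eigenvectorUnitary.1 * diagonal ((↑) ∘ (√·) ∘ hA.1.eigenvalues) *
  (star hA.1.eigenvectorUnitary : Matrix n n 𝕜)

open Polynomial in
theorem SemiconjBy.aeval {R A : Type*} [CommSemiring R] [Semiring A] [Algebra R A] {x a b : A}
    (h : SemiconjBy x a b) (p : R[X]) : SemiconjBy x (aeval a p) (aeval b p) := by
  induction p using Polynomial.induction_on with
  | C r =>
    rw [aeval_C, aeval_C]
    exact Algebra.commute_algebraMap_right r x
  | add p q hp hq => simpa only [map_add] using hp.add_right hq
  | monomial k r ih =>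
    simpa only [map_mul, map_pow, aeval_X, pow_succ, ← mul_assoc] using ih.mul_right h

theorem SemiconjBy.cfc {R A : Type*} {p : A → Prop} [Field R] [StarRing R] [MetricSpace R]
    [IsTopologicalSemiring R] [ContinuousStar R] [TopologicalSpace A] [Ring A] [StarRing A]
    [Algebra R A] [ContinuousFunctionalCalculus R A p] {x a b : A} (h : SemiconjBy x a b)
    (ha : p a) (hb : p b) (ha_fin : (spectrum R a).Finite) (hb_fin : (spectrum R b).Finite)
    (f : R → R) : SemiconjBy x (cfc f a) (cfc f b) := by
  classical
  set q := Lagrange.interpolate (ha_fin.union hb_fin).toFinset id f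
  have hq : ∀ c ∈ spectrum R a ∪ spectrum R b, f c = q.eval c := fun c hc =>
    (Lagrange.eval_interpolate_at_node f (Set.injOn_id _) (by simpa using hc)).symm
  rw [cfc_congr fun c hc => hq c (.inl hc), cfc_congr fun c hc => hq c (.inr hc),
    cfc_polynomial q a ha, cfc_polynomial q b hb]
  exact h.aeval q

section Sqrt

variable {n 𝕜 : Type*} [Fintype n] [DecidableEq n] [RCLike 𝕜] {A : Matrix n n 𝕜}

theorem Matrix.PosSemidef.sqrt_eq_cfc (hA : A.PosSemidef) : hA.sqrt = cfc Real.sqrt A :=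
  (hA.1.cfc_eq _).symm

theorem Matrix.PosDef.isUnit_sqrt (hA : A.PosDef) : IsUnit hA.posSemidef.sqrt := by
  rw [hA.posSemidef.sqrt_eq_cfc, isUnit_cfc_iff _ A (ha := hA.1.isSelfAdjoint),
    hA.1.spectrum_real_eq_range_eigenvalues]
  rintro _ ⟨i, rfl⟩
  exact (Real.sqrt_pos.mpr (hA.eigenvalues_pos i)).ne'

theorem SemiconjBy.posSemidef_sqrt {x B : Matrix n n 𝕜} (hA : A.PosSemidef) (hB : B.PosSemidef)
    (h : SemiconjBy x A B) : SemiconjBy x hA.sqrt hB.sqrt := by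
  rw [hA.sqrt_eq_cfc, hB.sqrt_eq_cfc]
  exact h.cfc hA.1.isSelfAdjoint hB.1.isSelfAdjoint A.finite_real_spectrum
    B.finite_real_spectrum _

end Sqrt

theorem Matrix.one_add_mul_mul_inv_mul_of_semiconjBy {n R : Type*} [Fintype n] [DecidableEq n]
    [CommRing R] {A B y : Matrix n n R} (hA : IsUnit A) (hB : IsUnit B) (h : SemiconjBy y A B)
    (z : Matrix n n R) : 1 + A * z * B⁻¹ * y = A * (1 + z * y) * A⁻¹ := by
  have hAd := (isUnit_iff_isUnit_det A).mp hA
  have hinv : B⁻¹ * y = y * A⁻¹ := by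
    rw [← mul_nonsing_inv_cancel_right A (B⁻¹ * y) hAd, mul_assoc B⁻¹, h.eq,
      nonsing_inv_mul_cancel_left B y ((isUnit_iff_isUnit_det B).mp hB)]
  rw [mul_assoc (A * z), hinv, mul_add, add_mul, mul_one, mul_nonsing_inv _ hAd]
  simp only [mul_assoc]

theorem siegel_disk_inverse_intermediate_general {n : ℕ}
    (x z : Matrix (Fin n) (Fin n) ℂ)
    (h1 : (1 - x * xᴴ).PosDef) (h2 : (1 - xᴴ * x).PosDef)
    (hzu : IsUnit (1 + z * xᴴ)) :
    IsUnit (1 + h1.posSemidef.sqrt * z * (h2.posSemidef.sqrt)⁻¹ * xᴴ) ∧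
    (1 + h1.posSemidef.sqrt * z * (h2.posSemidef.sqrt)⁻¹ * xᴴ)⁻¹ =
      h1.posSemidef.sqrt * (1 + z * xᴴ)⁻¹ * (h1.posSemidef.sqrt)⁻¹ := by
  set A := h1.posSemidef.sqrt
  have hA : IsUnit A := h1.isUnit_sqrt
  have hx : SemiconjBy xᴴ (1 - x * xᴴ) (1 - xᴴ * x) := by
    simp only [SemiconjBy, mul_sub, sub_mul, mul_one, one_mul, mul_assoc]
  rw [one_add_mul_mul_inv_mul_of_semiconjBy hA h2.isUnit_sqrt (hx.posSemidef_sqrt _ _)]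
  refine ⟨(hA.mul hzu).mul (isUnit_nonsing_inv_iff.mpr hA), ?_⟩
  rw [Matrix.mul_inv_rev, Matrix.mul_inv_rev,
    nonsing_inv_nonsing_inv _ ((isUnit_iff_isUnit_det A).mp hA), mul_assoc]

/-- Intermediate identity in the proof of Proposition 6.2:
`(I + (I - x xᴴ)^{1/2} z (I - xᴴ x)^{-1/2} xᴴ)⁻¹
  = (I - x xᴴ)^{1/2} (I + z xᴴ)⁻¹ (I - x xᴴ)^{-1/2}`, and the matrix on the left is
invertible. -/
theorem siegel_disk_inverse_intermediate {n : ℕ} (hn : 0 < n)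
    (x z : Matrix (Fin n) (Fin n) ℂ)
    (h1 : (1 - x * xᴴ).PosDef) (h2 : (1 - xᴴ * x).PosDef)
    (hzu : IsUnit (1 + z * xᴴ)) :
    IsUnit (1 + h1.posSemidef.sqrt * z * (h2.posSemidef.sqrt)⁻¹ * xᴴ) ∧
    (1 + h1.posSemidef.sqrt * z * (h2.posSemidef.sqrt)⁻¹ * xᴴ)⁻¹ =
      h1.posSemidef.sqrt * (1 + z * xᴴ)⁻¹ * (h1.posSemidef.sqrt)⁻¹ :=
  siegel_disk_inverse_intermediate_general x z h1 h2 hzu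
end

section
/- Let n be a positive integer and let x, z be n×n complex matrices such that I − x xᴴ and I − xᴴ x are (Hermitian) positive definite. Then (I − x xᴴ)^{1/2} z (I − xᴴ x)^{−1/2} + x = (I − x xᴴ)^{1/2} (z + x) (I − xᴴ x)^{−1/2}. -/
/-!
Since `x (xᴴ x) = (x xᴴ) x`, the square roots `S = (1 - x xᴴ)^{1/2}` and
`T = (1 - xᴴ x)^{1/2}` satisfy `S² x = x T²`. For positive semidefinite `S`, `T` this forces
`S x = x T`: `M = S x - x T` solves the Sylvester equation `S M + M T = 0`, whose two terms have
nonnegative traces after multiplying by `Mᴴ`, so `S M = M T = 0` and then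
`tr (Mᴴ M) = tr (Mᴴ S x) - tr (Mᴴ x T) = 0`. Hence `S x T⁻¹ = x`, which is the identity.
-/

open Matrix
open scoped ComplexOrder

open scoped MatrixOrder

namespace Matrix

variable {m n 𝕜 : Type*} [Fintype m] [Fintype n] [RCLike 𝕜]

lemma PosSemidef.sqrt_eq_cfcSqrt [DecidableEq n] {A : Matrix n n 𝕜} (hA : A.PosSemidef) :
    hA.sqrt = CFC.sqrt A := by
  rw [CFC.sqrt_eq_real_sqrt A hA.nonneg, cfcₙ_eq_cfc, hA.1.cfc_eq, IsHermitian.cfc,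
    Unitary.conjStarAlgAut_apply]
  rfl

lemma PosSemidef.posSemidef_sqrt [DecidableEq n] {A : Matrix n n 𝕜} (hA : A.PosSemidef) :
    hA.sqrt.PosSemidef :=
  hA.sqrt_eq_cfcSqrt ▸ (CFC.sqrt_nonneg A).posSemidef

lemma PosSemidef.sqrt_mul_self [DecidableEq n] {A : Matrix n n 𝕜} (hA : A.PosSemidef) :
    hA.sqrt * hA.sqrt = A :=
  hA.sqrt_eq_cfcSqrt ▸ CFC.sqrt_mul_sqrt_self A hA.nonneg

lemma PosDef.isUnit_det_sqrt [DecidableEq n] {A : Matrix n n 𝕜} (hA : A.PosDef) :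
    IsUnit hA.posSemidef.sqrt.det := by
  have hAdet : IsUnit A.det := (isUnit_iff_isUnit_det A).mp hA.isUnit
  rw [← hA.posSemidef.sqrt_mul_self, det_mul] at hAdet
  exact isUnit_of_mul_isUnit_left hAdet

lemma PosSemidef.mul_eq_zero_of_trace_conjTranspose_mul_mul_eq_zero {S : Matrix n n 𝕜}
    (hS : S.PosSemidef) {M : Matrix n m 𝕜} (h : (Mᴴ * S * M).trace = 0) : S * M = 0 := by
  classical
  obtain ⟨B, rfl⟩ := CStarAlgebra.nonneg_iff_eq_star_mul_self.mp hS.nonneg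
  rw [star_eq_conjTranspose, conjTranspose_mul_self_mul_eq_zero]
  rwa [star_eq_conjTranspose, show Mᴴ * (Bᴴ * B) * M = (B * M)ᴴ * (B * M) by
    simp only [conjTranspose_mul, Matrix.mul_assoc], trace_conjTranspose_mul_self_eq_zero_iff] at h

lemma PosSemidef.mul_eq_zero_of_mul_add_mul_eq_zero {S : Matrix m m 𝕜} {T : Matrix n n 𝕜}
    (hS : S.PosSemidef) (hT : T.PosSemidef) {M : Matrix m n 𝕜} (h : S * M + M * T = 0) :
    S * M = 0 := by
  have hsum : (Mᴴ * S * M).trace + (M * T * Mᴴ).trace = 0 := by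
    rw [Matrix.mul_assoc, trace_mul_comm (M * T), ← trace_add, ← Matrix.mul_add, h,
      Matrix.mul_zero, trace_zero]
  have htrace := (add_eq_zero_iff_of_nonneg (hS.conjTranspose_mul_mul_same M).trace_nonneg
    (hT.mul_mul_conjTranspose_same M).trace_nonneg).mp hsum
  exact hS.mul_eq_zero_of_trace_conjTranspose_mul_mul_eq_zero htrace.1

theorem PosSemidef.mul_eq_mul_of_mul_self_mul_eq {S : Matrix m m 𝕜} {T : Matrix n n 𝕜}
    (hS : S.PosSemidef) (hT : T.PosSemidef) {X : Matrix m n 𝕜} (h : S * S * X = X * (T * T)) :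
    S * X = X * T := by
  set M := S * X - X * T
  have hsylvester : S * M + M * T = 0 := by
    simp only [M, Matrix.mul_sub, Matrix.sub_mul, ← Matrix.mul_assoc, h]
    abel
  have hSM : S * M = 0 := hS.mul_eq_zero_of_mul_add_mul_eq_zero hT hsylvester
  have hMT : M * T = 0 := by rwa [hSM, zero_add] at hsylvester
  have hMS : Mᴴ * S = 0 := by
    rw [← hS.isHermitian.eq, ← conjTranspose_mul, hSM, conjTranspose_zero]
  have hM : (Mᴴ * M).trace = 0 := calc
    (Mᴴ * M).trace = (Mᴴ * S * X).trace - ((M * T)ᴴ * X).trace := by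
      rw [conjTranspose_mul, hT.isHermitian.eq, Matrix.mul_assoc T, trace_mul_comm T,
        ← trace_sub, Matrix.mul_assoc, Matrix.mul_assoc Mᴴ X, ← Matrix.mul_sub]
    _ = 0 := by rw [hMS, hMT]; simp
  exact sub_eq_zero.mp (trace_conjTranspose_mul_self_eq_zero_iff.mp hM)

end Matrix

theorem siegel_disk_tilde_plus_identity_general {n : ℕ}
    (x z : Matrix (Fin n) (Fin n) ℂ)
    (h1 : (1 - x * xᴴ).PosDef) (h2 : (1 - xᴴ * x).PosDef) :
    h1.posSemidef.sqrt * z * (h2.posSemidef.sqrt)⁻¹ + x =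
      h1.posSemidef.sqrt * (z + x) * (h2.posSemidef.sqrt)⁻¹ := by
  have hsq : h1.posSemidef.sqrt * h1.posSemidef.sqrt * x =
      x * (h2.posSemidef.sqrt * h2.posSemidef.sqrt) := by
    rw [h1.posSemidef.sqrt_mul_self, h2.posSemidef.sqrt_mul_self, Matrix.sub_mul, Matrix.mul_sub,
      Matrix.one_mul, Matrix.mul_one, Matrix.mul_assoc]
  have hx := h1.posSemidef.posSemidef_sqrt.mul_eq_mul_of_mul_self_mul_eq
    h2.posSemidef.posSemidef_sqrt hsq
  rw [Matrix.mul_add, Matrix.add_mul, hx, mul_nonsing_inv_cancel_right _ _ h2.isUnit_det_sqrt]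

/-- Intermediate identity in the proof of Proposition 6.2:
`(I - x xᴴ)^{1/2} z (I - xᴴ x)^{-1/2} + x = (I - x xᴴ)^{1/2} (z + x) (I - xᴴ x)^{-1/2}`. -/
theorem siegel_disk_tilde_plus_identity {n : ℕ} (hn : 0 < n)
    (x z : Matrix (Fin n) (Fin n) ℂ)
    (h1 : (1 - x * xᴴ).PosDef) (h2 : (1 - xᴴ * x).PosDef) :
    h1.posSemidef.sqrt * z * (h2.posSemidef.sqrt)⁻¹ + x =
      h1.posSemidef.sqrt * (z + x) * (h2.posSemidef.sqrt)⁻¹ :=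
  siegel_disk_tilde_plus_identity_general x z h1 h2
end
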